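/- arXiv:1204.5488 — 2 statements merged into one kernel-verified Lean document; each statement's English description precedes it below -/
import Mathlib

section
/- As n → ∞, √n·d_n(𝔽_n, F) − √n·d(𝔽_n, F) → 0 in probability; that is, for every δ > 0, P(|√n·d_n(𝔽_n, F) − √n·d(𝔽_n, F)| > δ) → 0. (This is the key step in proving that the CDF of √n·d_n(𝔽_n, F) and the CDF of the Cramér–von Mises statistic √n·d(𝔽_n, F) converge to each other uniformly.) -/
/-!
Write `k(u, x) = 1{u ≤ x} - F x`, so that `𝔽ₙ(x) - F(x) = n⁻¹ ∑ᵢ k(Xᵢ, x)`. Expanding the squares,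
`a = n dₙ(𝔽ₙ, F)²` and `b = n d(𝔽ₙ, F)²` differ by `n⁻² Vₙ`, where `Vₙ` is the V-statistic over
`[n]³` of the kernel `h(u, v, w) = k(u, w) k(v, w) - ∫ k(u, x) k(v, x) dμ(x)`.
This kernel is bounded and completely degenerate: integrating out any one argument against `μ`
gives zero. Hence in `E Vₙ² = ∑ E[h(X_s) h(X_t)]`, over pairs of index triples `s, t`, a term
vanishes as soon as some index occurs only once among the six, so at most `3⁶ n³` terms survive
and `E (a - b)² = O(1/n)`. Since `|√a - √b|² ≤ |a - b|`, Chebyshev's inequality concludes.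
-/

open Filter Topology MeasureTheory ProbabilityTheory

/-- A cumulative distribution function: non-decreasing, right-continuous,
tending to 0 at -∞ and to 1 at +∞. -/
def IsCDF (G : ℝ → ℝ) : Prop :=
  Monotone G ∧ (∀ x : ℝ, ContinuousWithinAt G (Set.Ici x) x) ∧
    Tendsto G atBot (𝓝 0) ∧ Tendsto G atTop (𝓝 1)

/-- The identifiable mixing proportion α₀. -/
noncomputable def alpha0 (F Fb : ℝ → ℝ) : ℝ :=
  sInf {γ : ℝ | γ ∈ Set.Ioc (0 : ℝ) 1 ∧
    IsCDF (fun x => (F x - (1 - γ) * Fb x) / γ)}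

variable {Ω : Type*} [MeasurableSpace Ω]

/-- The empirical CDF of the first n observations X₁(ω), …, Xₙ(ω). -/
noncomputable def empCDF (X : ℕ → Ω → ℝ) (n : ℕ) (ω : Ω) (x : ℝ) : ℝ :=
  (n : ℝ)⁻¹ * ∑ i ∈ Finset.range n, if X i ω ≤ x then (1 : ℝ) else 0

/-- The empirical L₂ distance dₙ(g,h) between two functions, based on the data
X₁(ω), …, Xₙ(ω). -/
noncomputable def empDist (X : ℕ → Ω → ℝ) (n : ℕ) (ω : Ω) (g h : ℝ → ℝ) : ℝ :=
  Real.sqrt ((n : ℝ)⁻¹ * ∑ i ∈ Finset.range n, (g (X i ω) - h (X i ω)) ^ 2)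

/-- The criterion function Cₙ(γ) = γ dₙ(F̂ₛₙᵞ, F̌ₛₙᵞ)
  = inf over CDFs W of dₙ(𝔽ₙ, γW + (1−γ)F_b), with Cₙ(0) = dₙ(𝔽ₙ, F_b). -/
noncomputable def critFn (Fb : ℝ → ℝ) (X : ℕ → Ω → ℝ) (n : ℕ) (γ : ℝ) (ω : Ω) : ℝ :=
  if γ = 0 then empDist X n ω (empCDF X n ω) Fb
  else sInf {v : ℝ | ∃ W : ℝ → ℝ, IsCDF W ∧
    v = empDist X n ω (empCDF X n ω) (fun x => γ * W x + (1 - γ) * Fb x)}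

/-- The estimator α̂ₙ = inf{γ ∈ [0,1] : √n Cₙ(γ) ≤ cₙ}. -/
noncomputable def hatAlpha (Fb : ℝ → ℝ) (X : ℕ → Ω → ℝ) (cn : ℝ) (n : ℕ) (ω : Ω) : ℝ :=
  sInf {γ : ℝ | γ ∈ Set.Icc (0 : ℝ) 1 ∧ Real.sqrt n * critFn Fb X n γ ω ≤ cn}

open Finset

section Independence

variable {ι α : Type*} [mα : MeasurableSpace α] {P : Measure Ω} {X : ι → Ω → α}

lemma ProbabilityTheory.iIndepFun.indepFun_restrict_ne (hX : iIndepFun X P)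
    (hmeas : ∀ i, Measurable (X i)) (a : ι) :
    IndepFun (X a) (fun ω (m : {m // m ≠ a}) => X m ω) P := by
  let M : ι → MeasurableSpace Ω := fun i => mα.comap (X i)
  have h := indep_iSup_of_disjoint (fun i => (hmeas i).comap_le)
    ((iIndepFun_iff_iIndep _ _ _).1 hX) (disjoint_compl_right (a := ({a} : Set ι)))
  rw [IndepFun_iff_Indep]
  refine indep_of_indep_of_le_right (indep_of_indep_of_le_left h ?_) ?_
  · exact le_iSup₂ (f := fun i (_ : i ∈ ({a} : Set ι)) => M i) a rfl
  · simp only [MeasurableSpace.pi, MeasurableSpace.comap_iSup, MeasurableSpace.comap_comp]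
    exact iSup_le fun m => le_iSup₂ (f := fun i (_ : i ∈ ({a} : Set ι)ᶜ) => M i) m.1 m.2

lemma integral_eq_zero_of_integral_update_eq_zero [IsProbabilityMeasure P] {μ : Measure α}
    [IsProbabilityMeasure μ] [DecidableEq ι] (hX : iIndepFun X P) (hmeas : ∀ i, Measurable (X i))
    (hdist : ∀ i, P.map (X i) = μ) {g : (ι → α) → ℝ} (hg : Measurable g) {C : ℝ}
    (hC : ∀ z, |g z| ≤ C) (a : ι) (hzero : ∀ z, ∫ x, g (Function.update z a x) ∂μ = 0) :
    ∫ ω, g (fun m => X m ω) ∂P = 0 := by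
  set Y : Ω → ({m // m ≠ a} → α) := fun ω m => X m ω
  have hY : Measurable Y := measurable_pi_lambda _ fun m => hmeas m
  -- `g (X · ω) = Φ (X a ω, Y ω)` with `Y` independent of `X a`, so Fubini integrates `X a` first
  let Φ : α × ({m // m ≠ a} → α) → ℝ :=
    fun p => g fun m => if h : m = a then p.1 else p.2 ⟨m, h⟩
  have hΦ : Measurable Φ := hg.comp <| measurable_pi_lambda _ fun m => by
    by_cases h : m = a
    · simpa [h] using measurable_fst
    · simp only [h, dite_false]; fun_prop
  have hmap : P.map (fun ω => (X a ω, Y ω)) = μ.prod (P.map Y) := by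
    rw [← hdist a]
    exact (indepFun_iff_map_prod_eq_prod_map_map (hmeas a).aemeasurable hY.aemeasurable).1
      (hX.indepFun_restrict_ne hmeas a)
  have : IsProbabilityMeasure (P.map Y) := Measure.isProbabilityMeasure_map hY.aemeasurable
  have hint : Integrable Φ (μ.prod (P.map Y)) :=
    Integrable.of_bound hΦ.aestronglyMeasurable C (ae_of_all _ fun p => hC _)
  obtain ⟨x₀⟩ := nonempty_of_isProbabilityMeasure μ
  have hslice (y) : ∫ x, Φ (x, y) ∂μ = 0 := by
    convert hzero fun m => if h : m = a then x₀ else y ⟨m, h⟩ using 4 with x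
    ext m
    by_cases h : m = a <;> simp [h]
  calc ∫ ω, g (fun m => X m ω) ∂P = ∫ p, Φ p ∂(P.map fun ω => (X a ω, Y ω)) := by
        rw [integral_map ((hmeas a).prodMk hY).aemeasurable hΦ.aestronglyMeasurable]
        congr with ω
        simp only [Φ, Y]
        congr with m
        split_ifs with h <;> simp [h]
    _ = 0 := by rw [hmap, integral_prod_symm _ hint]; simp [hslice]

end Independence

section Counting

variable {κ β : Type*} [Fintype κ] [DecidableEq β]

lemma two_mul_card_image_le_card {c : κ → β} (hc : ∀ q, ∃ q' ≠ q, c q' = c q) :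
    2 * #(univ.image c) ≤ Fintype.card κ := by
  have hfiber : ∀ b ∈ univ.image c, 2 ≤ #{q | c q = b} := by
    intro b hb
    obtain ⟨q, -, rfl⟩ := mem_image.1 hb
    obtain ⟨q', hne, hq'⟩ := hc q
    exact one_lt_card.2 ⟨q', by simp [hq'], q, by simp, hne⟩
  calc 2 * #(univ.image c) = ∑ _b ∈ univ.image c, 2 := by rw [sum_const, smul_eq_mul, mul_comm]
    _ ≤ ∑ b ∈ univ.image c, #{q | c q = b} := sum_le_sum hfiber
    _ = Fintype.card κ :=
        (card_eq_sum_card_fiberwise fun q _ => mem_image_of_mem c (mem_univ q)).symm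

lemma card_filter_card_image_le [DecidableEq κ] [Nonempty κ] (s : Finset β) (k : ℕ) :
    #{c ∈ Fintype.piFinset (fun _ : κ => s) | #(univ.image c) ≤ k} ≤
      k ^ Fintype.card κ * #s ^ k := by
  -- a map taking at most `k` values factors as `w ∘ φ` with `φ : κ → Fin k`
  have hsub : {c ∈ Fintype.piFinset (fun _ : κ => s) | #(univ.image c) ≤ k} ⊆
      univ.biUnion fun φ : κ → Fin k => (Fintype.piFinset fun _ : Fin k => s).image (· ∘ φ) := by
    intro c hc
    obtain ⟨hcs, hck⟩ := mem_filter.1 hc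
    rw [Fintype.mem_piFinset] at hcs
    let e : univ.image c ↪ Fin k := (univ.image c).equivFin.toEmbedding.trans (Fin.castLEEmb hck)
    let φ : κ → Fin k := fun q => e ⟨c q, mem_image_of_mem c (mem_univ q)⟩
    have hφ : Function.FactorsThrough c φ := fun q q' h => by
      simpa using congrArg Subtype.val (e.injective h)
    obtain ⟨q₀⟩ := ‹Nonempty κ›
    refine mem_biUnion.2 ⟨φ, mem_univ _, mem_image.2 ⟨Function.extend φ c fun _ => c q₀, ?_, ?_⟩⟩
    · refine Fintype.mem_piFinset.2 fun j => ?_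
      rw [Function.extend_def]
      split_ifs <;> exact hcs _
    · exact funext fun q => hφ.extend_apply _ q
  calc _ ≤ _ := card_le_card hsub
    _ ≤ ∑ φ : κ → Fin k, #((Fintype.piFinset fun _ : Fin k => s).image (· ∘ φ)) := card_biUnion_le
    _ ≤ ∑ _φ : κ → Fin k, #s ^ k :=
        sum_le_sum fun φ _ => card_image_le.trans (Fintype.card_piFinset_const s k).le
    _ = k ^ Fintype.card κ * #s ^ k := by simp

lemma Finset.sum_piFinset_fin_three {β M : Type*} [DecidableEq β] [AddCommMonoid M]
    (s : Finset β) (f : (Fin 3 → β) → M) :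
    ∑ t ∈ Fintype.piFinset (fun _ => s), f t = ∑ i ∈ s, ∑ j ∈ s, ∑ k ∈ s, f ![i, j, k] := by
  simp_rw [← sum_product']
  refine sum_nbij' (fun t => (t 0, t 1, t 2)) (fun p => ![p.1, p.2.1, p.2.2]) ?_ ?_ ?_ ?_ ?_
  · simp +contextual [Fintype.mem_piFinset]
  · rintro ⟨i, j, k⟩ h
    simp only [mem_product] at h
    simp [Fintype.mem_piFinset, Fin.forall_fin_succ, h]
  · intro t _
    ext p; fin_cases p <;> rfl
  · intro p _; rfl
  · intro t _
    congr; ext p; fin_cases p <;> rfl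

end Counting

lemma abs_mul_le_sq_of_abs_le {β : Type*} {f : β → ℝ} {C : ℝ} (hC : ∀ y, |f y| ≤ C) (y z : β) :
    |f y * f z| ≤ C ^ 2 := by
  rw [abs_mul, sq]
  exact mul_le_mul (hC y) (hC z) (abs_nonneg _) ((abs_nonneg _).trans (hC y))

section DegenerateKernel

variable {α ι : Type*} [DecidableEq ι]

def IsCompletelyDegenerate [MeasurableSpace α] (μ : Measure α) (A : (ι → α) → ℝ) : Prop :=
  ∀ (y : ι → α) (p : ι), ∫ x, A (Function.update y p x) ∂μ = 0

def vStat [Fintype ι] (A : (ι → α) → ℝ) (X : ℕ → Ω → α) (n : ℕ) (ω : Ω) : ℝ :=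
  ∑ t ∈ Fintype.piFinset (fun _ : ι => range n), A fun p => X (t p) ω

variable [MeasurableSpace α] {P : Measure Ω} [IsProbabilityMeasure P] {μ : Measure α}
  [IsProbabilityMeasure μ] {X : ℕ → Ω → α} {A : (ι → α) → ℝ} {C : ℝ}

lemma integral_mul_eq_zero_of_lone_index (hX : iIndepFun X P) (hmeas : ∀ i, Measurable (X i))
    (hdist : ∀ i, P.map (X i) = μ) (hA : Measurable A) (hC : ∀ y, |A y| ≤ C)
    (hdeg : IsCompletelyDegenerate μ A) {s t : ι → ℕ} {p : ι} (hs : ∀ p' ≠ p, s p' ≠ s p)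
    (ht : ∀ q, t q ≠ s p) :
    ∫ ω, A (fun q => X (s q) ω) * A (fun q => X (t q) ω) ∂P = 0 := by
  refine integral_eq_zero_of_integral_update_eq_zero hX hmeas hdist
    (g := fun z => A (fun q => z (s q)) * A (fun q => z (t q))) (by fun_prop)
    (fun z => abs_mul_le_sq_of_abs_le hC _ _) (s p) fun z => ?_
  have hupdate (x : α) : (fun q => Function.update z (s p) x (s q)) =
      Function.update (fun q => z (s q)) p x := by
    ext q
    by_cases hq : q = p
    · simp [hq]
    · simp [hq, hs q hq]
  simp only [hupdate, Function.update_comp_eq_of_forall_ne' z _ ht]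
  rw [integral_mul_const, hdeg, zero_mul]

lemma integral_mul_eq_zero_of_exists_lone_index (hX : iIndepFun X P)
    (hmeas : ∀ i, Measurable (X i)) (hdist : ∀ i, P.map (X i) = μ) (hA : Measurable A)
    (hC : ∀ y, |A y| ≤ C) (hdeg : IsCompletelyDegenerate μ A) {s t : ι → ℕ}
    (hlone : ∃ q, ∀ q' ≠ q, Sum.elim s t q' ≠ Sum.elim s t q) :
    ∫ ω, A (fun q => X (s q) ω) * A (fun q => X (t q) ω) ∂P = 0 := by
  obtain ⟨p | p, hp⟩ := hlone
  · exact integral_mul_eq_zero_of_lone_index hX hmeas hdist hA hC hdeg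
      (fun p' hne => hp (.inl p') (Sum.inl_injective.ne hne)) (fun q => hp (.inr q) Sum.inr_ne_inl)
  · simpa only [mul_comm] using integral_mul_eq_zero_of_lone_index hX hmeas hdist hA hC hdeg
      (s := t) (t := s) (fun p' hne => hp (.inr p') (Sum.inr_injective.ne hne))
      (fun q => hp (.inl q) Sum.inl_ne_inr)

lemma memLp_vStat [Fintype ι] (hmeas : ∀ i, Measurable (X i)) (hA : Measurable A)
    (hC : ∀ y, |A y| ≤ C) (p : ENNReal) (n : ℕ) : MemLp (vStat A X n) p P := by
  refine MemLp.of_bound (Finset.measurable_sum _ fun t _ => by fun_prop).aestronglyMeasurable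
    (C * n ^ Fintype.card ι) (ae_of_all _ fun ω => ?_)
  calc ‖vStat A X n ω‖ ≤ ∑ t ∈ Fintype.piFinset (fun _ : ι => range n), C :=
        (norm_sum_le _ _).trans (sum_le_sum fun t _ => hC _)
    _ = C * n ^ Fintype.card ι := by simp [Fintype.card_piFinset, mul_comm]

lemma integral_vStat_sq_le [Fintype ι] [Nonempty ι] (hX : iIndepFun X P)
    (hmeas : ∀ i, Measurable (X i)) (hdist : ∀ i, P.map (X i) = μ) (hA : Measurable A)
    (hC : ∀ y, |A y| ≤ C) (hdeg : IsCompletelyDegenerate μ A) (n : ℕ) :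
    ∫ ω, vStat A X n ω ^ 2 ∂P ≤
      C ^ 2 * Fintype.card ι ^ (2 * Fintype.card ι) * n ^ Fintype.card ι := by
  set T := Fintype.piFinset fun _ : ι => range n
  set term : (ι → ℕ) × (ι → ℕ) → ℝ :=
    fun st => ∫ ω, A (fun q => X (st.1 q) ω) * A (fun q => X (st.2 q) ω) ∂P
  set good := {st ∈ T ×ˢ T | ∀ q, ∃ q' ≠ q, Sum.elim st.1 st.2 q' = Sum.elim st.1 st.2 q}
  have hexpand : ∫ ω, vStat A X n ω ^ 2 ∂P = ∑ st ∈ T ×ˢ T, term st := by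
    simp only [vStat, sq, sum_mul_sum, ← sum_product']
    exact integral_finsetSum _ fun st _ => Integrable.of_bound (by fun_prop) (C ^ 2)
      (ae_of_all _ fun ω => abs_mul_le_sq_of_abs_le hC _ _)
  have hgood : ∑ st ∈ T ×ˢ T, term st = ∑ st ∈ good, term st := by
    refine (sum_filter_of_ne fun st _ hne => ?_).symm
    by_contra hbad
    push Not at hbad
    exact hne (integral_mul_eq_zero_of_exists_lone_index hX hmeas hdist hA hC hdeg hbad)
  have hcard : #good ≤ Fintype.card ι ^ (2 * Fintype.card ι) * n ^ Fintype.card ι := by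
    let e := (Equiv.sumArrowEquivProdArrow ι ι ℕ).symm
    have hmaps : ∀ st ∈ good, e st ∈ {c ∈ Fintype.piFinset (fun _ : ι ⊕ ι => range n) |
        #(univ.image c) ≤ Fintype.card ι} := by
      intro st hst
      obtain ⟨hT, hrep⟩ := mem_filter.1 hst
      obtain ⟨hs, ht⟩ := mem_product.1 hT
      refine mem_filter.2 ⟨Fintype.mem_piFinset.2 ?_, ?_⟩
      · rintro (q | q)
        exacts [Fintype.mem_piFinset.1 hs q, Fintype.mem_piFinset.1 ht q]
      · have := two_mul_card_image_le_card hrep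
        rw [Fintype.card_sum] at this
        change #(univ.image (Sum.elim st.1 st.2)) ≤ _
        omega
    calc #good ≤ _ := card_le_card_of_injOn e hmaps e.injective.injOn
      _ ≤ _ := card_filter_card_image_le _ _
      _ = _ := by rw [Fintype.card_sum, card_range, two_mul]
  calc ∫ ω, vStat A X n ω ^ 2 ∂P = ∑ st ∈ good, term st := by rw [hexpand, hgood]
    _ ≤ ∑ _st ∈ good, C ^ 2 := sum_le_sum fun st _ => by
        have := norm_integral_le_of_norm_le_const (μ := P)
          (f := fun ω => A (fun q => X (st.1 q) ω) * A (fun q => X (st.2 q) ω))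
          (ae_of_all _ fun ω => abs_mul_le_sq_of_abs_le hC _ _)
        simpa using (le_abs_self _).trans this
    _ = C ^ 2 * #good := by rw [sum_const, nsmul_eq_mul, mul_comm]
    _ ≤ C ^ 2 * (Fintype.card ι ^ (2 * Fintype.card ι) * n ^ Fintype.card ι) := by
        gcongr; exact_mod_cast hcard
    _ = _ := by ring

end DegenerateKernel

lemma sq_abs_sqrt_sub_sqrt_le {a b : ℝ} (ha : 0 ≤ a) (hb : 0 ≤ b) :
    |√a - √b| ^ 2 ≤ |a - b| := by
  have hfactor : a - b = (√a - √b) * (√a + √b) := by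
    linear_combination -Real.mul_self_sqrt ha + Real.mul_self_sqrt hb
  have hle : |√a - √b| ≤ √a + √b := by
    simpa [abs_of_nonneg (Real.sqrt_nonneg _)] using abs_sub (√a) (√b)
  rw [hfactor, abs_mul, abs_of_nonneg (by positivity : 0 ≤ √a + √b), sq]
  exact mul_le_mul_of_nonneg_left hle (abs_nonneg _)

lemma tendstoInMeasure_zero_of_integral_sq_le {P : Measure Ω}
    [IsFiniteMeasure P] {Z : ℕ → Ω → ℝ} (hZ : ∀ n, MemLp (Z n) 2 P) {c : ℝ}
    (hbound : ∀ n, ∫ ω, Z n ω ^ 2 ∂P ≤ c / n) : TendstoInMeasure P Z atTop 0 := by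
  refine tendstoInMeasure_iff_dist.2 fun ε hε => ?_
  have hmarkov (n : ℕ) : P.real {ω | ε ≤ dist (Z n ω) 0} ≤ c / ε ^ 2 / n := by
    have hsub : {ω | ε ≤ dist (Z n ω) 0} ⊆ {ω | ε ^ 2 ≤ Z n ω ^ 2} := fun ω hω => by
      simpa [Real.dist_eq, sq_abs] using pow_le_pow_left₀ hε.le hω 2
    calc P.real {ω | ε ≤ dist (Z n ω) 0} ≤ P.real {ω | ε ^ 2 ≤ Z n ω ^ 2} := measureReal_mono hsub
      _ ≤ (∫ ω, Z n ω ^ 2 ∂P) / ε ^ 2 := by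
          rw [le_div_iff₀ (by positivity), mul_comm]
          exact mul_meas_ge_le_integral_of_nonneg (ae_of_all _ fun ω => sq_nonneg _)
            (hZ n).integrable_sq _
      _ ≤ c / ε ^ 2 / n := by
          rw [div_right_comm]; gcongr; exact hbound n
  have hreal : Tendsto (fun n : ℕ => P.real {ω | ε ≤ dist (Z n ω) 0}) atTop (𝓝 0) :=
    squeeze_zero (fun n => measureReal_nonneg) hmarkov (tendsto_const_div_atTop_nhds_zero_nat _)
  simpa [ofReal_measureReal] using ENNReal.tendsto_ofReal hreal

section CramerVonMises

variable {μ : Measure ℝ} {F : ℝ → ℝ}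

noncomputable def centeredIndicator (F : ℝ → ℝ) (u x : ℝ) : ℝ := (if u ≤ x then 1 else 0) - F x

noncomputable def indicatorCov (F : ℝ → ℝ) (μ : Measure ℝ) (u v : ℝ) : ℝ :=
  ∫ x, centeredIndicator F u x * centeredIndicator F v x ∂μ

noncomputable def cvmKernel (F : ℝ → ℝ) (μ : Measure ℝ) (y : Fin 3 → ℝ) : ℝ :=
  centeredIndicator F (y 0) (y 2) * centeredIndicator F (y 1) (y 2) - indicatorCov F μ (y 0) (y 1)

lemma measurable_of_measureReal_Iic_eq [IsFiniteMeasure μ] (hμ : ∀ x, μ.real (Set.Iic x) = F x) :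
    Measurable F :=
  Monotone.measurable fun x y h => by
    simpa only [hμ] using measureReal_mono (μ := μ) (Set.Iic_subset_Iic.2 h)

@[fun_prop]
lemma measurable_centeredIndicator {α : Type*} [MeasurableSpace α] (hF : Measurable F)
    {f g : α → ℝ} (hf : Measurable f) (hg : Measurable g) :
    Measurable fun a => centeredIndicator F (f a) (g a) :=
  (Measurable.ite (measurableSet_le hf hg) measurable_const measurable_const).sub (hF.comp hg)

lemma abs_centeredIndicator_le [IsProbabilityMeasure μ] (hμ : ∀ x, μ.real (Set.Iic x) = F x)
    (u x : ℝ) : |centeredIndicator F u x| ≤ 1 := by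
  have h0 : 0 ≤ F x := hμ x ▸ measureReal_nonneg
  have h1 : F x ≤ 1 := hμ x ▸ measureReal_le_one
  rw [centeredIndicator, abs_le]
  split_ifs <;> constructor <;> linarith

lemma indicatorCov_comm (u v : ℝ) : indicatorCov F μ u v = indicatorCov F μ v u := by
  simp only [indicatorCov, mul_comm]

lemma abs_indicatorCov_le [IsProbabilityMeasure μ] (hμ : ∀ x, μ.real (Set.Iic x) = F x)
    (u v : ℝ) : |indicatorCov F μ u v| ≤ 1 := by
  simpa [indicatorCov] using norm_integral_le_of_norm_le_const (μ := μ)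
    (f := fun x => centeredIndicator F u x * centeredIndicator F v x)
    (ae_of_all _ fun x => by
      simpa using abs_mul_le_sq_of_abs_le (abs_centeredIndicator_le hμ · x) u v)

@[fun_prop]
lemma measurable_indicatorCov {α : Type*} [MeasurableSpace α] [SFinite μ] (hF : Measurable F)
    {f g : α → ℝ} (hf : Measurable f) (hg : Measurable g) :
    Measurable fun a => indicatorCov F μ (f a) (g a) := by
  have : StronglyMeasurable fun p : (ℝ × ℝ) × ℝ =>
      centeredIndicator F p.1.1 p.2 * centeredIndicator F p.1.2 p.2 :=
    (by fun_prop : Measurable _).stronglyMeasurable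
  exact this.integral_prod_right'.measurable.comp (hf.prodMk hg)

lemma measurable_cvmKernel [SFinite μ] (hF : Measurable F) : Measurable (cvmKernel F μ) := by
  unfold cvmKernel
  fun_prop

variable [IsProbabilityMeasure μ]

lemma integral_centeredIndicator_left (hμ : ∀ x, μ.real (Set.Iic x) = F x) (x : ℝ) :
    ∫ u, centeredIndicator F u x ∂μ = 0 := by
  have hind : ∫ u, (if u ≤ x then (1 : ℝ) else 0) ∂μ = F x := by
    rw [← hμ x, ← integral_indicator_one measurableSet_Iic]
    rfl
  simp only [centeredIndicator]
  have hind_int : Integrable (fun u => if u ≤ x then (1 : ℝ) else 0) μ :=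
    (integrable_const 1).indicator measurableSet_Iic
  rw [integral_sub hind_int (integrable_const _), hind, integral_const, probReal_univ, one_smul,
    sub_self]

lemma integral_indicatorCov_left (hμ : ∀ x, μ.real (Set.Iic x) = F x) (v : ℝ) :
    ∫ u, indicatorCov F μ u v ∂μ = 0 := by
  have hF := measurable_of_measureReal_Iic_eq hμ
  have hint : Integrable (fun p : ℝ × ℝ => centeredIndicator F p.1 p.2 * centeredIndicator F v p.2)
      (μ.prod μ) := Integrable.of_bound (by fun_prop) 1 (ae_of_all _ fun p => by
        simpa using abs_mul_le_sq_of_abs_le (abs_centeredIndicator_le hμ · p.2) p.1 v)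
  simp only [indicatorCov]
  rw [integral_integral_swap hint]
  simp [integral_mul_const, integral_centeredIndicator_left hμ]

lemma abs_cvmKernel_le (hμ : ∀ x, μ.real (Set.Iic x) = F x) (y : Fin 3 → ℝ) :
    |cvmKernel F μ y| ≤ 2 := by
  have := abs_mul_le_sq_of_abs_le (abs_centeredIndicator_le hμ · (y 2)) (y 0) (y 1)
  have := abs_indicatorCov_le hμ (y 0) (y 1)
  have := abs_sub (centeredIndicator F (y 0) (y 2) * centeredIndicator F (y 1) (y 2))
    (indicatorCov F μ (y 0) (y 1))
  rw [cvmKernel]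
  linarith

lemma isCompletelyDegenerate_cvmKernel (hμ : ∀ x, μ.real (Set.Iic x) = F x) :
    IsCompletelyDegenerate μ (cvmKernel F μ) := by
  have hF := measurable_of_measureReal_Iic_eq hμ
  have hleft (v w : ℝ) :
      ∫ x, centeredIndicator F x w * centeredIndicator F v w - indicatorCov F μ x v ∂μ = 0 := by
    have h1 : Integrable (fun x => centeredIndicator F x w * centeredIndicator F v w) μ :=
      (Integrable.of_bound (by fun_prop) 1
        (ae_of_all _ fun x => abs_centeredIndicator_le hμ x w)).mul_const _
    have h2 : Integrable (fun x => indicatorCov F μ x v) μ :=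
      Integrable.of_bound (by fun_prop) 1 (ae_of_all _ fun x => abs_indicatorCov_le hμ x v)
    rw [integral_sub h1 h2, integral_mul_const, integral_centeredIndicator_left hμ,
      integral_indicatorCov_left hμ, zero_mul, sub_zero]
  intro y p
  fin_cases p <;> simp only [cvmKernel, Function.update, Fin.isValue, Fin.reduceEq, dite_false,
    dite_true, eq_rec_constant, Fin.zero_eta, Fin.mk_one, Fin.reduceFinMk]
  · exact hleft _ _
  · simp_rw [mul_comm (centeredIndicator F (y 0) (y 2)), indicatorCov_comm (y 0)]
    exact hleft _ _
  · have h : Integrable (fun x => centeredIndicator F (y 0) x * centeredIndicator F (y 1) x) μ :=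
      Integrable.of_bound (by fun_prop) 1 (ae_of_all _ fun x => by
        simpa using abs_mul_le_sq_of_abs_le (abs_centeredIndicator_le hμ · x) (y 0) (y 1))
    rw [integral_sub h (integrable_const _), integral_const, probReal_univ, one_smul, indicatorCov,
      sub_self]

variable {Ω : Type*}

lemma sqrt_mul_empDist (X : ℕ → Ω → ℝ) {n : ℕ} (hn : n ≠ 0) (ω : Ω) (G : ℝ → ℝ) :
    √n * empDist X n ω G F = √(∑ k ∈ range n, (G (X k ω) - F (X k ω)) ^ 2) := by
  rw [empDist, ← Real.sqrt_mul n.cast_nonneg, ← mul_assoc, mul_inv_cancel₀ (by exact_mod_cast hn),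
    one_mul]

lemma sum_sq_sub_mul_integral_sq_eq_vStat (hμ : ∀ x, μ.real (Set.Iic x) = F x)
    (X : ℕ → Ω → ℝ) {n : ℕ} (hn : n ≠ 0) (ω : Ω) :
    ∑ k ∈ range n, (empCDF X n ω (X k ω) - F (X k ω)) ^ 2 - n * ∫ x, (empCDF X n ω x - F x) ^ 2 ∂μ
      = (n : ℝ)⁻¹ ^ 2 * vStat (cvmKernel F μ) X n ω := by
  have hF := measurable_of_measureReal_Iic_eq hμ
  have hdev (x : ℝ) :
      empCDF X n ω x - F x = (n : ℝ)⁻¹ * ∑ i ∈ range n, centeredIndicator F (X i ω) x := by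
    simp only [empCDF, centeredIndicator, sum_sub_distrib, sum_const, card_range, nsmul_eq_mul]
    field_simp
  have hsq (x : ℝ) : (empCDF X n ω x - F x) ^ 2 = (n : ℝ)⁻¹ ^ 2 * ∑ i ∈ range n, ∑ j ∈ range n,
      centeredIndicator F (X i ω) x * centeredIndicator F (X j ω) x := by
    rw [hdev, mul_pow, sq (∑ i ∈ range n, _), sum_mul_sum]
  have hint (i j : ℕ) :
      Integrable (fun x => centeredIndicator F (X i ω) x * centeredIndicator F (X j ω) x) μ :=
    Integrable.of_bound (by fun_prop) 1 (ae_of_all _ fun x => by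
      simpa using abs_mul_le_sq_of_abs_le (abs_centeredIndicator_le hμ · x) (X i ω) (X j ω))
  have hempirical : ∑ k ∈ range n, (empCDF X n ω (X k ω) - F (X k ω)) ^ 2 = (n : ℝ)⁻¹ ^ 2 *
      ∑ i ∈ range n, ∑ j ∈ range n, ∑ k ∈ range n,
        centeredIndicator F (X i ω) (X k ω) * centeredIndicator F (X j ω) (X k ω) := by
    simp only [hsq]
    rw [← mul_sum, sum_comm]
    exact congrArg _ (sum_congr rfl fun i _ => sum_comm)
  have hpopulation : (n : ℝ) * ∫ x, (empCDF X n ω x - F x) ^ 2 ∂μ = (n : ℝ)⁻¹ ^ 2 *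
      ∑ i ∈ range n, ∑ j ∈ range n, ∑ _k ∈ range n, indicatorCov F μ (X i ω) (X j ω) := by
    simp_rw [hsq, integral_const_mul,
      integral_finsetSum _ fun i _ => integrable_finsetSum _ fun j _ => hint i j,
      integral_finsetSum _ fun j _ => hint _ j, sum_const, card_range, nsmul_eq_mul, indicatorCov]
    rw [mul_left_comm, mul_sum]
    simp_rw [mul_sum]
  rw [hempirical, hpopulation, vStat, sum_piFinset_fin_three, ← mul_sub]
  simp [cvmKernel, sum_sub_distrib]

variable [MeasurableSpace Ω] {P : Measure Ω} [IsProbabilityMeasure P] {X : ℕ → Ω → ℝ}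

lemma integral_inv_sq_mul_vStat_cvmKernel_sq_le (hμ : ∀ x, μ.real (Set.Iic x) = F x)
    (hX : iIndepFun X P) (hmeas : ∀ i, Measurable (X i)) (hdist : ∀ i, P.map (X i) = μ) (n : ℕ) :
    ∫ ω, ((n : ℝ)⁻¹ ^ 2 * vStat (cvmKernel F μ) X n ω) ^ 2 ∂P ≤ 2 ^ 2 * 3 ^ 6 / n := by
  have hF := measurable_of_measureReal_Iic_eq hμ
  have hV := integral_vStat_sq_le hX hmeas hdist (measurable_cvmKernel hF)
    (abs_cvmKernel_le hμ) (isCompletelyDegenerate_cvmKernel hμ) n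
  simp only [mul_pow, integral_const_mul, Fintype.card_fin, Nat.cast_ofNat] at hV ⊢
  rcases n.eq_zero_or_pos with rfl | hn
  · simp
  calc _ ≤ ((n : ℝ)⁻¹ ^ 2) ^ 2 * (2 ^ 2 * 3 ^ (2 * 3) * n ^ 3) := by gcongr
    _ = 2 ^ 2 * 3 ^ 6 / n := by field_simp

end CramerVonMises

theorem empirical_dist_vs_population_dist_general
    (P : Measure Ω) [IsProbabilityMeasure P]
    (F : ℝ → ℝ)
    (μ : Measure ℝ) [IsProbabilityMeasure μ]
    (hμ : ∀ x : ℝ, (μ (Set.Iic x)).toReal = F x)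
    (X : ℕ → Ω → ℝ) (hmeas : ∀ i, Measurable (X i))
    (hindep : iIndepFun X P)
    (hdist : ∀ i, Measure.map (X i) P = μ) :
    ∀ δ : ℝ, 0 < δ →
      Tendsto
        (fun n : ℕ => P {ω | δ <
          |Real.sqrt n * empDist X n ω (empCDF X n ω) F -
            Real.sqrt n * Real.sqrt (∫ x, (empCDF X n ω x - F x) ^ 2 ∂μ)|})
        atTop (𝓝 0) := by
  intro δ hδ
  have hF := measurable_of_measureReal_Iic_eq hμ
  have hZ : TendstoInMeasure P
      (fun (n : ℕ) ω => (n : ℝ)⁻¹ ^ 2 * vStat (cvmKernel F μ) X n ω) atTop 0 :=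
    tendstoInMeasure_zero_of_integral_sq_le
      (fun n => (memLp_vStat hmeas (measurable_cvmKernel hF) (abs_cvmKernel_le hμ) 2 n).const_mul _)
      (integral_inv_sq_mul_vStat_cvmKernel_sq_le hμ hindep hmeas hdist)
  refine tendsto_of_tendsto_of_tendsto_of_le_of_le' tendsto_const_nhds
    (tendstoInMeasure_iff_dist.1 hZ (δ ^ 2) (by positivity)) (.of_forall fun _ => zero_le) ?_
  filter_upwards [eventually_ne_atTop 0] with n hn
  refine measure_mono fun ω hω => ?_
  have hsq := sq_abs_sqrt_sub_sqrt_le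
    (sum_nonneg fun k (_ : k ∈ range n) => sq_nonneg (empCDF X n ω (X k ω) - F (X k ω)))
    (mul_nonneg n.cast_nonneg (integral_nonneg (μ := μ) fun x => sq_nonneg (empCDF X n ω x - F x)))
  rw [Set.mem_ofPred_eq, sqrt_mul_empDist X hn, ← Real.sqrt_mul n.cast_nonneg] at hω
  rw [Set.mem_ofPred_eq, Pi.zero_apply, Real.dist_eq, sub_zero,
    ← sum_sq_sub_mul_integral_sq_eq_vStat hμ X hn]
  exact (pow_lt_pow_left₀ hω hδ.le two_ne_zero).le.trans hsq

/-- Key step in Theorem (convergence of Hₙ to the Cramér–von Mises law):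
√n dₙ(𝔽ₙ, F) − √n d(𝔽ₙ, F) → 0 in probability. -/
theorem empirical_dist_vs_population_dist
    (P : Measure Ω) [IsProbabilityMeasure P]
    (F : ℝ → ℝ) (hFcdf : IsCDF F)
    (μ : Measure ℝ) [IsProbabilityMeasure μ]
    (hμ : ∀ x : ℝ, (μ (Set.Iic x)).toReal = F x)
    (X : ℕ → Ω → ℝ) (hmeas : ∀ i, Measurable (X i))
    (hindep : iIndepFun X P)
    (hdist : ∀ i, Measure.map (X i) P = μ) :
    ∀ δ : ℝ, 0 < δ →
      Tendsto
        (fun n : ℕ => P {ω | δ <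
          |Real.sqrt n * empDist X n ω (empCDF X n ω) F -
            Real.sqrt n * Real.sqrt (∫ x, (empCDF X n ω x - F x) ^ 2 ∂μ)|})
        atTop (𝓝 0) :=
  empirical_dist_vs_population_dist_general P F μ hμ X hmeas hindep hdist
end

section
/- Let ε ≥ 0 and suppose sup_{x ≥ 0} |G(x) − F_s(x)| ≤ ε. Then the least concave majorant G† of G, defined by G†(x) := inf{H(x) : H : [0,∞) → ℝ concave with H(t) ≥ G(t) for all t ≥ 0}, is well-defined (the infimum is over a nonempty family and is finite), and satisfies sup_{x ≥ 0} |G†(x) − F_s(x)| ≤ ε. -/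
/-- Deterministic core of Theorem 5: if G is uniformly within ε of a concave
function F_s on [0,∞) and G is bounded there, then the least concave majorant
of G on [0,∞) is well-defined and is also uniformly within ε of F_s. -/
theorem lcm_uniform_approx
    (Fs G : ℝ → ℝ) (hFs : ConcaveOn ℝ (Set.Ici (0 : ℝ)) Fs)
    (hGbdd : ∃ M : ℝ, ∀ x ∈ Set.Ici (0 : ℝ), |G x| ≤ M)
    (ε : ℝ) (hε : 0 ≤ ε)
    (happrox : ∀ x ∈ Set.Ici (0 : ℝ), |G x - Fs x| ≤ ε)
    (Gdag : ℝ → ℝ)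
    (hGdag : Gdag = fun x => sInf {y : ℝ | ∃ H : ℝ → ℝ,
      ConcaveOn ℝ (Set.Ici (0 : ℝ)) H ∧ (∀ t ∈ Set.Ici (0 : ℝ), G t ≤ H t) ∧
      y = H x}) :
    (∀ x ∈ Set.Ici (0 : ℝ),
      ({y : ℝ | ∃ H : ℝ → ℝ, ConcaveOn ℝ (Set.Ici (0 : ℝ)) H ∧
          (∀ t ∈ Set.Ici (0 : ℝ), G t ≤ H t) ∧ y = H x}).Nonempty ∧
      BddBelow {y : ℝ | ∃ H : ℝ → ℝ, ConcaveOn ℝ (Set.Ici (0 : ℝ)) H ∧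
          (∀ t ∈ Set.Ici (0 : ℝ), G t ≤ H t) ∧ y = H x}) ∧
    (∀ x ∈ Set.Ici (0 : ℝ), |Gdag x - Fs x| ≤ ε) := by

  have hFse : ConcaveOn ℝ (Set.Ici (0 : ℝ)) (fun x => Fs x + ε) :=
    hFs.add (concaveOn_const ε (convex_Ici 0))
  have hmaj : ∀ t ∈ Set.Ici (0 : ℝ), G t ≤ Fs t + ε := by
    intro t ht
    have := abs_le.mp (happrox t ht)
    linarith [this.2]
  have hmem : ∀ x, (Fs x + ε) ∈ {y : ℝ | ∃ H : ℝ → ℝ,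
      ConcaveOn ℝ (Set.Ici (0 : ℝ)) H ∧ (∀ t ∈ Set.Ici (0 : ℝ), G t ≤ H t) ∧
      y = H x} := fun x => ⟨fun x => Fs x + ε, hFse, hmaj, rfl⟩
  have hbdd : ∀ x ∈ Set.Ici (0 : ℝ), G x ∈ lowerBounds {y : ℝ | ∃ H : ℝ → ℝ,
      ConcaveOn ℝ (Set.Ici (0 : ℝ)) H ∧ (∀ t ∈ Set.Ici (0 : ℝ), G t ≤ H t) ∧
      y = H x} := by
    rintro x hx y ⟨H, _, hH, rfl⟩
    exact hH x hx
  refine ⟨fun x hx => ⟨⟨_, hmem x⟩, ⟨G x, hbdd x hx⟩⟩, ?_⟩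
  intro x hx
  have h1 : Gdag x ≤ Fs x + ε := by
    rw [hGdag]
    exact csInf_le ⟨G x, hbdd x hx⟩ (hmem x)
  have h2 : G x ≤ Gdag x := by
    rw [hGdag]
    exact le_csInf ⟨_, hmem x⟩ (hbdd x hx)
  have := abs_le.mp (happrox x hx)
  rw [abs_le]
  constructor <;> linarith [this.1]
end
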